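/- For every j ∈ ℕ, setting U_j := Σ_{l₁≥0, l₂≥j} β(l₁+l₂+1)·β(l₂)·X^{l₁}·Y^{l₂} and B_j(Y) := Σ_{l≥0} β(j+l)²·Yˡ in the ring of formal power series in two variables X, Y over ℝ, one has (1 − λq⁻¹·X + q⁻¹·X²)·(1 + q⁻¹·Y)·U_j = Y^j · ((q⁻¹λ − q⁻¹·X − q⁻²·XY)·B_j(Y) + β(j)·β(j+1) − q⁻¹λ·β(j)²). -/

import Mathlib

/-- The formal power series in two variables `X = X 0`, `Y = X 1` over `ℝ` with coefficient
`f a b` on `Xᵃ·Yᵇ`. -/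
def mk2 (f : ℕ → ℕ → ℝ) : MvPowerSeries (Fin 2) ℝ := fun m => f (m 0) (m 1)

open MvPowerSeries

/-!
For each fixed `l₂`, the coefficients `β(l₁ + l₂ + 1)` of `U_j` satisfy, in `l₁`, the
recurrence whose characteristic polynomial is `1 − λq⁻¹X + q⁻¹X²`, so multiplying by it leaves only
the terms of `X`-degree `0` and `1`; the recurrence turns the degree-one term into `−q⁻¹β(l₂)²`.
What remains is an identity of series in `Y` alone, whose coefficients match by the recurrence
once more, in the form `β(k + 2) + q⁻¹β(k) = q⁻¹λβ(k + 1)`.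
-/

def mkY (s : ℕ → ℝ) : MvPowerSeries (Fin 2) ℝ := mk2 fun a b => if a = 0 then s b else 0

lemma mk2_add (f g : ℕ → ℕ → ℝ) : mk2 f + mk2 g = mk2 fun a b => f a b + g a b := rfl

lemma mk2_sub (f g : ℕ → ℕ → ℝ) : mk2 f - mk2 g = mk2 fun a b => f a b - g a b := rfl

lemma C_mul_mk2 (c : ℝ) (f : ℕ → ℕ → ℝ) :
    C (σ := Fin 2) c * mk2 f = mk2 fun a b => c * f a b := by
  ext m
  rw [coeff_C_mul]
  rfl

lemma X0_pow_mul_mk2 (n : ℕ) (f : ℕ → ℕ → ℝ) :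
    (X 0 : MvPowerSeries (Fin 2) ℝ) ^ n * mk2 f
      = mk2 fun a b => if n ≤ a then f (a - n) b else 0 := by
  ext m
  rw [X_pow_eq, coeff_monomial_mul, coeff_apply, coeff_apply]
  simp only [mk2, Finsupp.single_le_iff, Finsupp.tsub_apply, Finsupp.single_eq_same,
    Finsupp.single_eq_of_ne (show (1 : Fin 2) ≠ 0 by decide), tsub_zero, one_mul]

lemma X1_pow_mul_mk2 (n : ℕ) (f : ℕ → ℕ → ℝ) :
    (X 1 : MvPowerSeries (Fin 2) ℝ) ^ n * mk2 f
      = mk2 fun a b => if n ≤ b then f a (b - n) else 0 := by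
  ext m
  rw [X_pow_eq, coeff_monomial_mul, coeff_apply, coeff_apply]
  simp only [mk2, Finsupp.single_le_iff, Finsupp.tsub_apply, Finsupp.single_eq_same,
    Finsupp.single_eq_of_ne (show (0 : Fin 2) ≠ 1 by decide), tsub_zero, one_mul]

lemma C_eq_mkY (c : ℝ) : C (σ := Fin 2) c = mkY fun b => if b = 0 then c else 0 := by
  classical
  ext m
  rw [coeff_C, coeff_apply]
  simp only [mkY, mk2, ← ite_and]
  congr 1
  simp only [Finsupp.ext_iff, Fin.forall_fin_two, Finsupp.coe_zero, Pi.zero_apply]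

lemma mkY_add (s t : ℕ → ℝ) : mkY s + mkY t = mkY fun b => s b + t b := by
  rw [mkY, mkY, mk2_add, mkY]
  congr
  funext a b
  split_ifs <;> simp

lemma C_mul_mkY (c : ℝ) (s : ℕ → ℝ) : C (σ := Fin 2) c * mkY s = mkY fun b => c * s b := by
  rw [mkY, C_mul_mk2, mkY]
  simp only [mul_ite, mul_zero]

lemma X1_pow_mul_mkY (n : ℕ) (s : ℕ → ℝ) :
    (X 1 : MvPowerSeries (Fin 2) ℝ) ^ n * mkY s
      = mkY fun b => if n ≤ b then s (b - n) else 0 := by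
  rw [mkY, X1_pow_mul_mk2, mkY]
  congr
  funext a b
  split_ifs <;> rfl

lemma mkY_ite_le (j : ℕ) (s : ℕ → ℝ) :
    mkY (fun b => if j ≤ b then s b else 0) = X 1 ^ j * mkY fun t => s (j + t) := by
  rw [X1_pow_mul_mkY]
  congr
  funext b
  split_ifs with h
  · rw [Nat.add_sub_cancel' h]
  · rfl

lemma charPoly_mul_mk2 {q lam : ℝ} (hq : q ≠ 0) {f : ℕ → ℕ → ℝ}
    (hf : ∀ a b, q * f (a + 2) b - lam * f (a + 1) b + f a b = 0) :
    (1 - C (σ := Fin 2) (lam * q⁻¹) * X 0 + C q⁻¹ * X 0 ^ 2) * mk2 f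
      = mkY (fun b => f 0 b) + X 0 * mkY fun b => f 1 b - lam * q⁻¹ * f 0 b := by
  have hexp : (1 - C (σ := Fin 2) (lam * q⁻¹) * X 0 + C q⁻¹ * X 0 ^ 2) * mk2 f
      = mk2 f - C (lam * q⁻¹) * (X 0 * mk2 f) + C q⁻¹ * (X 0 ^ 2 * mk2 f) := by ring
  have hX (g : ℕ → ℕ → ℝ) : X 0 * mk2 g = mk2 fun a b => if 1 ≤ a then g (a - 1) b else 0 := by
    simpa only [pow_one] using X0_pow_mul_mk2 1 g
  rw [hexp, mkY, mkY, hX, hX, X0_pow_mul_mk2, C_mul_mk2, C_mul_mk2, mk2_sub, mk2_add, mk2_add]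
  congr
  funext a b
  rcases a with _ | _ | a
  · simp
  · simp
  · simp only [le_add_iff_nonneg_left, zero_le, ↓reduceIte, add_tsub_cancel_right,
      Nat.reduceSubDiff, Nat.add_eq_zero_iff, one_ne_zero, and_false, and_self, add_zero]
    field_simp
    linear_combination hf a b

section Recurrence

variable {q lam : ℝ} {β : ℕ → ℝ} (hq : q ≠ 0)
  (hrec : ∀ k : ℕ, q * β (k + 2) - lam * β (k + 1) + β k = 0)
include hq hrec

lemma charPoly_mul_U (j : ℕ) :
    (1 - C (σ := Fin 2) (lam * q⁻¹) * X 0 + C q⁻¹ * X 0 ^ 2) *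
        mk2 (fun l₁ l₂ => if j ≤ l₂ then β (l₁ + l₂ + 1) * β l₂ else 0)
      = X 1 ^ j * (mkY (fun t => β (j + t) * β (j + t + 1))
          - C q⁻¹ * X 0 * mkY fun t => β (j + t) ^ 2) := by
  have hu : ∀ a b, q * (if j ≤ b then β (a + 2 + b + 1) * β b else 0)
      - lam * (if j ≤ b then β (a + 1 + b + 1) * β b else 0)
      + (if j ≤ b then β (a + b + 1) * β b else 0) = 0 := by
    intro a b
    rw [show a + 2 + b + 1 = a + b + 1 + 2 by omega, show a + 1 + b + 1 = a + b + 1 + 1 by omega]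
    split_ifs
    · linear_combination β b * hrec (a + b + 1)
    · ring
  have h0 : (fun b => if j ≤ b then β (0 + b + 1) * β b else 0)
      = fun b => if j ≤ b then β b * β (b + 1) else 0 := by
    funext b
    rw [zero_add, mul_comm]
  have h1 : (fun b => (if j ≤ b then β (1 + b + 1) * β b else 0)
        - lam * q⁻¹ * if j ≤ b then β (0 + b + 1) * β b else 0)
      = fun b => if j ≤ b then -q⁻¹ * β b ^ 2 else 0 := by
    funext b
    rw [zero_add, show 1 + b + 1 = b + 2 by omega]
    split_ifs
    · field_simp
      linear_combination β b * hrec b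
    · ring
  rw [charPoly_mul_mk2 hq hu, h0, h1, mkY_ite_le, mkY_ite_le, ← C_mul_mkY, map_neg]
  ring

lemma one_add_C_mul_X1_mul_mkY (j : ℕ) :
    (1 + C (σ := Fin 2) q⁻¹ * X 1) * mkY (fun t => β (j + t) * β (j + t + 1))
      = C (q⁻¹ * lam) * mkY (fun t => β (j + t) ^ 2)
          + C (β j * β (j + 1) - q⁻¹ * lam * β j ^ 2) := by
  have hX (s : ℕ → ℝ) : X 1 * mkY s = mkY fun b => if 1 ≤ b then s (b - 1) else 0 := by
    simpa only [pow_one] using X1_pow_mul_mkY 1 s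
  rw [add_mul, one_mul, mul_assoc, hX, C_mul_mkY, C_mul_mkY, C_eq_mkY, mkY_add, mkY_add]
  congr
  funext b
  rcases b with _ | t
  · simp
  · simp only [le_add_iff_nonneg_left, zero_le, ↓reduceIte, add_tsub_cancel_right,
      Nat.add_eq_zero_iff, one_ne_zero, and_false, add_zero]
    field_simp
    linear_combination β (j + t + 1) * hrec (j + t)

end Recurrence

/-- with `U_j = Σ_{l₁≥0, l₂≥j} β(l₁+l₂+1)β(l₂)X^{l₁}Y^{l₂}` and
`B_j(Y) = Σ_{l≥0} β(j+l)²Yˡ`,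
`(1 − λq⁻¹X + q⁻¹X²)(1 + q⁻¹Y)·U_j
  = Y^j·((q⁻¹λ − q⁻¹X − q⁻²XY)·B_j(Y) + β(j)β(j+1) − q⁻¹λβ(j)²)`. -/
theorem stmt10 (q lam : ℝ) (hq : q ≠ 0) (β : ℕ → ℝ)
    (hrec : ∀ k : ℕ, q * β (k + 2) - lam * β (k + 1) + β k = 0) (j : ℕ) :
    (1 - MvPowerSeries.C (σ := Fin 2) (R := ℝ) (lam * q⁻¹) * MvPowerSeries.X 0 +
        MvPowerSeries.C (σ := Fin 2) (R := ℝ) q⁻¹ * MvPowerSeries.X 0 ^ 2) *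
      (1 + MvPowerSeries.C (σ := Fin 2) (R := ℝ) q⁻¹ * MvPowerSeries.X 1) *
      mk2 (fun l₁ l₂ => if j ≤ l₂ then β (l₁ + l₂ + 1) * β l₂ else 0) =
    MvPowerSeries.X 1 ^ j *
      ((MvPowerSeries.C (σ := Fin 2) (R := ℝ) (q⁻¹ * lam) -
          MvPowerSeries.C (σ := Fin 2) (R := ℝ) q⁻¹ * MvPowerSeries.X 0 -
          MvPowerSeries.C (σ := Fin 2) (R := ℝ) (q⁻¹ ^ 2) * MvPowerSeries.X 0 * MvPowerSeries.X 1) *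
        mk2 (fun a b => if a = 0 then β (j + b) ^ 2 else 0) +
        MvPowerSeries.C (σ := Fin 2) (R := ℝ) (β j * β (j + 1) - q⁻¹ * lam * β j ^ 2)) := by
  have hU := charPoly_mul_U hq hrec j
  have hY := one_add_C_mul_X1_mul_mkY hq hrec j
  rw [map_pow]
  change _ = _ * (_ * mkY _ + _)
  linear_combination (1 + C q⁻¹ * X 1) * hU + X 1 ^ j * hY
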